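/- arXiv:1611.02327 — 4 statements merged into one kernel-verified Lean document; each statement's English description precedes it below -/
import Mathlib

section
/- Let T : X ⇉ X* be a multivalued operator. Then for every x ∈ X, T^ρ(x) = N°_{V_T(x)}(x) ∩ N_{W_T(x)}(x). -/
open NormedSpace

section PseudoDefs

variable {X : Type*} [NormedAddCommGroup X] [NormedSpace ℝ X]

/-- `(x,x*) ∼_p (y,y*)`: the pseudomonotone relation. -/
def PseudoRel (p q : X × StrongDual ℝ X) : Prop :=
  min (q.2 (p.1 - q.1)) (p.2 (q.1 - p.1)) < 0 ∨
    (q.2 (p.1 - q.1) = 0 ∧ p.2 (q.1 - p.1) = 0)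

/-- An operator (identified with its graph) is pseudomonotone if any two of its
elements are pseudomonotonically related. -/
def Pseudomonotone (T : Set (X × StrongDual ℝ X)) : Prop :=
  ∀ p ∈ T, ∀ q ∈ T, PseudoRel p q

/-- The pseudomonotone polar `T^ρ`. -/
def pPolar (T : Set (X × StrongDual ℝ X)) : Set (X × StrongDual ℝ X) :=
  {p | ∀ q ∈ T, PseudoRel p q}

/-- The monotone polar `T^μ`. -/
def mPolar (T : Set (X × StrongDual ℝ X)) : Set (X × StrongDual ℝ X) :=
  {p | ∀ q ∈ T, 0 ≤ (p.2 - q.2) (p.1 - q.1)}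

/-- A monotone operator. -/
def MonotoneOp (T : Set (X × StrongDual ℝ X)) : Prop :=
  ∀ p ∈ T, ∀ q ∈ T, 0 ≤ (p.2 - q.2) (p.1 - q.1)

/-- The image `T(x)` of an operator at a point. -/
def img (T : Set (X × StrongDual ℝ X)) (x : X) : Set (StrongDual ℝ X) :=
  {x' | (x, x') ∈ T}

/-- The domain of an operator. -/
def opDom (T : Set (X × StrongDual ℝ X)) : Set X :=
  {x | (img T x).Nonempty}

/-- The set of zeros `Z_T` of an operator. -/
def zeros (T : Set (X × StrongDual ℝ X)) : Set X :=
  {x | (x, (0 : StrongDual ℝ X)) ∈ T}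

/-- The strict conic hull `cone_∘(A)` of a subset of the dual. -/
def coneS (A : Set (StrongDual ℝ X)) : Set (StrongDual ℝ X) :=
  {v | ∃ t : ℝ, 0 < t ∧ ∃ a ∈ A, v = t • a}

/-- The conic hull `cone(A)` of a subset of the dual. -/
def coneH (A : Set (StrongDual ℝ X)) : Set (StrongDual ℝ X) :=
  {v | ∃ t : ℝ, 0 ≤ t ∧ ∃ a ∈ A, v = t • a}

/-- The operator `cone_∘(T)`, with `(cone_∘(T))(x) = cone_∘(T(x))`. -/
def coneOp (T : Set (X × StrongDual ℝ X)) : Set (X × StrongDual ℝ X) :=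
  {p | p.2 ∈ coneS (img T p.1)}

/-- The normal cone `N_C(x)`. -/
def normalCone (C : Set X) (x : X) : Set (StrongDual ℝ X) :=
  {x' | ∀ y ∈ C, x' (y - x) ≤ 0}

/-- The strict normal cone `N°_C(x)`. -/
def strictNormalCone (C : Set X) (x : X) : Set (StrongDual ℝ X) :=
  {x' | ∀ y ∈ C, x' (y - x) < 0}

/-- `V_T(x) = {y : ∃ y* ∈ T(y), ⟨x - y, y*⟩ > 0}`. -/
def Vset (T : Set (X × StrongDual ℝ X)) (x : X) : Set X :=
  {y | ∃ y' ∈ img T y, 0 < y' (x - y)}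

/-- `W_T(x) = {y : ∃ y* ∈ T(y), ⟨x - y, y*⟩ = 0}`. -/
def Wset (T : Set (X × StrongDual ℝ X)) (x : X) : Set X :=
  {y | ∃ y' ∈ img T y, y' (x - y) = 0}

/-- Maximal pseudomonotonicity. -/
def MaxPseudomonotone (T : Set (X × StrongDual ℝ X)) : Prop :=
  Pseudomonotone T ∧ ∀ S : Set (X × StrongDual ℝ X), T ⊆ S → Pseudomonotone S → T = S

/-- Pre-maximal pseudomonotonicity: both `T` and `T^ρ` are pseudomonotone. -/
def PreMaxPseudomonotone (T : Set (X × StrongDual ℝ X)) : Prop :=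
  Pseudomonotone T ∧ Pseudomonotone (pPolar T)

/-- The restriction `T|_A` of an operator to a set `A`. -/
def restrictOp (T : Set (X × StrongDual ℝ X)) (A : Set X) : Set (X × StrongDual ℝ X) :=
  {p ∈ T | p.1 ∈ A}

/-- `L(T,x) = {y : ∃ y* ∈ T(y), ⟨x - y, y*⟩ ≥ 0}`. -/
def Lset (T : Set (X × StrongDual ℝ X)) (x : X) : Set X :=
  {y | ∃ y' ∈ img T y, 0 ≤ y' (x - y)}

/-- The operator `T̂ `: `T̂(x) = N_{L(T,x)}(x)` on `Z_T`, `cone_∘(T(x))` on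
`dom(T) \ Z_T`, and `∅` outside `dom(T)`. -/
def hatOp (T : Set (X × StrongDual ℝ X)) : Set (X × StrongDual ℝ X) :=
  {p | (p.1 ∈ zeros T ∧ p.2 ∈ normalCone (Lset T p.1) p.1) ∨
       (p.1 ∈ opDom T ∧ p.1 ∉ zeros T ∧ p.2 ∈ coneS (img T p.1))}

/-- Two operators are equivalent: same domain, same zeros, and the same conic
hulls of images outside the set of zeros. -/
def EquivOp (T S : Set (X × StrongDual ℝ X)) : Prop :=
  opDom T = opDom S ∧ zeros T = zeros S ∧
    ∀ x ∈ opDom T \ zeros T, coneH (img T x) = coneH (img S x)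

/-- `D`-maximal pseudomonotonicity (Hadjisavvas): `T` is pseudomonotone and some
equivalent pseudomonotone operator has no proper pseudomonotone extension with
the same domain. -/
def DMaxPseudomonotone (T : Set (X × StrongDual ℝ X)) : Prop :=
  Pseudomonotone T ∧ ∃ S : Set (X × StrongDual ℝ X), EquivOp T S ∧ Pseudomonotone S ∧
    ∀ S' : Set (X × StrongDual ℝ X), S ⊆ S' → Pseudomonotone S' → opDom S' = opDom S → S' = S

/-- The solution set of the Stampacchia variational inequality problem. -/
def SVIsol (T : Set (X × StrongDual ℝ X)) (K : Set X) : Set X :=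
  {x ∈ K | ∃ x' ∈ img T x, ∀ y ∈ K, 0 ≤ x' (y - x)}

/-- The solution set of the Minty variational inequality problem. -/
def MVIsol (T : Set (X × StrongDual ℝ X)) (K : Set X) : Set X :=
  {x ∈ K | ∀ q ∈ T, q.1 ∈ K → q.2 (x - q.1) ≤ 0}

/-- The linear perturbation `T + α*`. -/
def pertOp (T : Set (X × StrongDual ℝ X)) (α : StrongDual ℝ X) : Set (X × StrongDual ℝ X) :=
  {p | ∃ q ∈ T, p = (q.1, q.2 + α)}

end PseudoDefs

theorem min_lt_zero_or_and_eq_zero_iff {α : Type*} [LinearOrder α] [Zero α] {a b : α} :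
    min a b < 0 ∨ (a = 0 ∧ b = 0) ↔ (0 < a → b < 0) ∧ (a = 0 → b ≤ 0) := by
  grind

section PseudoPolar

variable {X : Type*} [NormedAddCommGroup X] [NormedSpace ℝ X]
  {T : Set (X × StrongDual ℝ X)} {x : X} {x' : StrongDual ℝ X}

theorem pseudoRel_iff {p q : X × StrongDual ℝ X} :
    PseudoRel p q ↔ (0 < q.2 (p.1 - q.1) → p.2 (q.1 - p.1) < 0) ∧
      (q.2 (p.1 - q.1) = 0 → p.2 (q.1 - p.1) ≤ 0) :=
  min_lt_zero_or_and_eq_zero_iff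

theorem mem_strictNormalCone_Vset_iff :
    x' ∈ strictNormalCone (Vset T x) x ↔ ∀ q ∈ T, 0 < q.2 (x - q.1) → x' (q.1 - x) < 0 := by
  simp [strictNormalCone, Vset, img]

theorem mem_normalCone_Wset_iff :
    x' ∈ normalCone (Wset T x) x ↔ ∀ q ∈ T, q.2 (x - q.1) = 0 → x' (q.1 - x) ≤ 0 := by
  simp [normalCone, Wset, img]

end PseudoPolar

theorem pPolar_eq_strictNormalCone_inter_normalCone
    {X : Type*} [NormedAddCommGroup X] [NormedSpace ℝ X]
    (T : Set (X × StrongDual ℝ X)) (x : X) :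
    img (pPolar T) x = strictNormalCone (Vset T x) x ∩ normalCone (Wset T x) x := by
  ext x'
  change (∀ q ∈ T, PseudoRel (x, x') q) ↔ _
  simp only [pseudoRel_iff, Set.mem_inter_iff, mem_strictNormalCone_Vset_iff,
    mem_normalCone_Wset_iff]
  exact forall₂_and
end

section
/- Let T : X ⇉ X* be a multivalued operator and x ∈ X. The following are equivalent: (1) V_T(x) = ∅; (2) x ∈ Z_{T^ρ}; (3) T^ρ(x) = N_{W_T(x)}(x); (4) x ∈ dom(T^ρ) and T^ρ(x) is closed in the weak* topology σ(X*, X). -/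
open NormedSpace

theorem zero_mem_of_isClosed_of_smul_mem {E : Type*} [AddCommGroup E] [Module ℝ E]
    [TopologicalSpace E] [ContinuousSMul ℝ E] {s : Set E} (hs : IsClosed s) (hne : s.Nonempty)
    (hsmul : ∀ v ∈ s, ∀ t : ℝ, 0 < t → t • v ∈ s) : (0 : E) ∈ s := by
  obtain ⟨v, hv⟩ := hne
  have hlim : Filter.Tendsto (fun t : ℝ => t • v) (nhdsWithin 0 (Set.Ioi 0)) (nhds 0) := by
    have hcont : Continuous fun t : ℝ => t • v := continuous_id.smul continuous_const
    simpa using (hcont.tendsto 0).mono_left nhdsWithin_le_nhds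
  exact hs.mem_of_tendsto hlim (eventually_nhdsWithin_of_forall fun t ht => hsmul v hv t ht)

section PseudomonotonePolar

variable {X : Type*} [NormedAddCommGroup X] [NormedSpace ℝ X]

theorem isClosed_toWeakDual_image_normalCone (C : Set X) (x : X) :
    IsClosed (StrongDual.toWeakDual '' normalCone C x) := by
  have himage : StrongDual.toWeakDual '' normalCone C x =
      ⋂ y ∈ C, {w : WeakDual ℝ X | w (y - x) ≤ 0} := by
    ext w
    simp only [Set.mem_iInter]
    exact ⟨by rintro ⟨x', hx', rfl⟩; exact hx', fun hw => ⟨StrongDual.toWeakDual.symm w, hw, rfl⟩⟩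
  rw [himage]
  exact isClosed_biInter fun y _ => isClosed_le (WeakDual.eval_continuous (y - x)) continuous_const

theorem Vset_eq_empty_iff (T : Set (X × StrongDual ℝ X)) (x : X) :
    Vset T x = ∅ ↔ ∀ q ∈ T, q.2 (x - q.1) ≤ 0 := by
  simp only [Set.eq_empty_iff_forall_notMem, Vset, img, Set.mem_ofPred_eq, not_exists, not_and,
    not_lt]
  exact ⟨fun h q hq => h q.1 q.2 hq, fun h y y' hy => h (y, y') hy⟩

theorem pseudoRel_zero_left_iff (x : X) (q : X × StrongDual ℝ X) :
    PseudoRel (x, 0) q ↔ q.2 (x - q.1) ≤ 0 := by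
  simp only [PseudoRel, zero_apply, min_lt_iff, lt_irrefl, or_false, and_true]
  exact le_iff_lt_or_eq.symm

theorem mem_zeros_pPolar_iff (T : Set (X × StrongDual ℝ X)) (x : X) :
    x ∈ zeros (pPolar T) ↔ ∀ q ∈ T, q.2 (x - q.1) ≤ 0 :=
  forall₂_congr fun q _ => pseudoRel_zero_left_iff x q

theorem smul_mem_img_pPolar {T : Set (X × StrongDual ℝ X)} {x : X} {x' : StrongDual ℝ X}
    (hx' : x' ∈ img (pPolar T) x) {t : ℝ} (ht : 0 < t) : t • x' ∈ img (pPolar T) x := by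
  intro q hq
  have hscale : (t • x') (q.1 - x) = t * x' (q.1 - x) := rfl
  rcases hx' q hq with hmin | ⟨hq0, hx0⟩
  · refine Or.inl ?_
    rcases min_lt_iff.mp hmin with hneg | hneg
    · exact min_lt_iff.mpr (Or.inl hneg)
    · exact min_lt_iff.mpr (Or.inr (by simpa [hscale] using mul_neg_of_pos_of_neg ht hneg))
  · exact Or.inr ⟨hq0, by simp [hscale, hx0]⟩

/-- A pair `q ∈ T` with `q.2 (x - q.1) < 0` is related to every `(x, x*)`; only the pairs with
`q.2 (x - q.1) = 0`, i.e. the points of `W_T(x)`, constrain `x*`. -/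
theorem img_pPolar_eq_normalCone_Wset {T : Set (X × StrongDual ℝ X)} {x : X}
    (hT : ∀ q ∈ T, q.2 (x - q.1) ≤ 0) : img (pPolar T) x = normalCone (Wset T x) x := by
  ext x'
  constructor
  · rintro hx' y ⟨y', hy', horth⟩
    rcases hx' (y, y') hy' with hmin | ⟨_, hx0⟩
    · rcases min_lt_iff.mp hmin with hneg | hneg
      · exact absurd horth hneg.ne
      · exact hneg.le
    · exact hx0.le
  · intro hx' q hq
    rcases (hT q hq).lt_or_eq with hneg | horth
    · exact Or.inl (min_lt_iff.mpr (Or.inl hneg))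
    · rcases (hx' q.1 ⟨q.2, hq, horth⟩).lt_or_eq with hneg' | horth'
      · exact Or.inl (min_lt_iff.mpr (Or.inr hneg'))
      · exact Or.inr ⟨horth, horth'⟩

theorem mem_zeros_of_img_eq_normalCone {S : Set (X × StrongDual ℝ X)} {C : Set X} {x : X}
    (h : img S x = normalCone C x) : x ∈ zeros S := by
  change (0 : StrongDual ℝ X) ∈ img S x
  rw [h]
  intro y _
  simp

theorem mem_zeros_pPolar_of_isClosed {T : Set (X × StrongDual ℝ X)} {x : X}
    (hdom : x ∈ opDom (pPolar T)) (hclosed : IsClosed (StrongDual.toWeakDual '' img (pPolar T) x)) :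
    x ∈ zeros (pPolar T) := by
  obtain ⟨x', hx'⟩ := hdom
  have hzero := zero_mem_of_isClosed_of_smul_mem hclosed ⟨_, x', hx', rfl⟩ <| by
    rintro _ ⟨v, hv, rfl⟩ t ht
    exact ⟨t • v, smul_mem_img_pPolar hv ht, map_smul _ t v⟩
  obtain ⟨v, hv, hv0⟩ := hzero
  rwa [show v = 0 from StrongDual.toWeakDual.injective (by rw [hv0, map_zero])] at hv

end PseudomonotonePolar

theorem pPolar_zeros_tfae
    {X : Type*} [NormedAddCommGroup X] [NormedSpace ℝ X]
    (T : Set (X × StrongDual ℝ X)) (x : X) :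
    [Vset T x = ∅,
     x ∈ zeros (pPolar T),
     img (pPolar T) x = normalCone (Wset T x) x,
     x ∈ opDom (pPolar T) ∧ IsClosed (StrongDual.toWeakDual '' img (pPolar T) x)].TFAE := by
  tfae_have 1 ↔ 2 := (Vset_eq_empty_iff T x).trans (mem_zeros_pPolar_iff T x).symm
  tfae_have 2 → 3 := fun h => img_pPolar_eq_normalCone_Wset ((mem_zeros_pPolar_iff T x).mp h)
  tfae_have 3 → 4 := fun h =>
    ⟨⟨0, mem_zeros_of_img_eq_normalCone h⟩, h ▸ isClosed_toWeakDual_image_normalCone _ x⟩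
  tfae_have 4 → 2 := fun ⟨hdom, hclosed⟩ => mem_zeros_pPolar_of_isClosed hdom hclosed
  tfae_finish
end

section
/- Let T : X ⇉ X* be a multivalued operator. The following are equivalent: (1) T is pseudomonotone; (2) T ⊂ T^ρ; (3) T^ρρ ⊂ T^ρ; (4) T^ρρ is pseudomonotone; (5) cone_∘(T) is pseudomonotone. -/
open NormedSpace

/-! The polar `ρ` is an antitone Galois connection with itself (`PseudoRel` is symmetric), so
`T ⊆ T^ρρ` and `T^ρρρ = T^ρ`; all five conditions reduce to `T ⊆ T^ρ`. Rescaling the dual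
vectors by positive factors preserves the signs in `PseudoRel`, which handles `cone_∘(T)`. -/

section Pseudomonotone

variable {X : Type*} [NormedAddCommGroup X] [NormedSpace ℝ X]

theorem PseudoRel.symm {p q : X × StrongDual ℝ X} (h : PseudoRel p q) : PseudoRel q p := by
  rcases h with h | ⟨h₁, h₂⟩
  · exact Or.inl (by rwa [min_comm])
  · exact Or.inr ⟨h₂, h₁⟩

theorem PseudoRel.smul {x y : X} {x' y' : StrongDual ℝ X} {t s : ℝ} (ht : 0 < t) (hs : 0 < s)
    (h : PseudoRel (x, x') (y, y')) : PseudoRel (x, t • x') (y, s • y') := by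
  simp only [PseudoRel, smul_apply, smul_eq_mul, min_lt_iff] at h ⊢
  rcases h with (h | h) | ⟨h₁, h₂⟩
  · exact Or.inl (Or.inl (mul_neg_of_pos_of_neg hs h))
  · exact Or.inl (Or.inr (mul_neg_of_pos_of_neg ht h))
  · exact Or.inr ⟨by rw [h₁, mul_zero], by rw [h₂, mul_zero]⟩

theorem Pseudomonotone.mono {S T : Set (X × StrongDual ℝ X)} (hT : Pseudomonotone T)
    (hST : S ⊆ T) : Pseudomonotone S :=
  fun p hp q hq => hT p (hST hp) q (hST hq)

theorem pPolar_anti {S T : Set (X × StrongDual ℝ X)} (h : S ⊆ T) : pPolar T ⊆ pPolar S :=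
  fun _ hp q hq => hp q (h hq)

theorem subset_pPolar_pPolar (T : Set (X × StrongDual ℝ X)) : T ⊆ pPolar (pPolar T) :=
  fun _ hp _ hq => (hq _ hp).symm

theorem subset_coneOp (T : Set (X × StrongDual ℝ X)) : T ⊆ coneOp T :=
  fun p hp => ⟨1, one_pos, p.2, hp, (one_smul ℝ p.2).symm⟩

theorem Pseudomonotone.coneOp {T : Set (X × StrongDual ℝ X)} (hT : Pseudomonotone T) :
    Pseudomonotone (coneOp T) := by
  rintro ⟨x, -⟩ ⟨t, ht, a, ha, rfl⟩ ⟨y, -⟩ ⟨s, hs, b, hb, rfl⟩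
  exact (hT (x, a) ha (y, b) hb).smul ht hs

end Pseudomonotone

theorem pseudomonotone_tfae
    {X : Type*} [NormedAddCommGroup X] [NormedSpace ℝ X]
    (T : Set (X × StrongDual ℝ X)) :
    [Pseudomonotone T,
     T ⊆ pPolar T,
     pPolar (pPolar T) ⊆ pPolar T,
     Pseudomonotone (pPolar (pPolar T)),
     Pseudomonotone (coneOp T)].TFAE := by
  tfae_have 1 ↔ 2 := Iff.rfl
  tfae_have 2 → 3 := pPolar_anti
  tfae_have 3 → 4 := fun h => h.trans (subset_pPolar_pPolar (pPolar T))
  tfae_have 4 → 1 := fun h => h.mono (subset_pPolar_pPolar T)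
  tfae_have 1 → 5 := Pseudomonotone.coneOp
  tfae_have 5 → 1 := fun h => h.mono (subset_coneOp T)
  tfae_finish
end

section
/- Let T : X ⇉ X* be a multivalued operator. Then, for every K ⊂ X, S(T^ρ, K) ⊂ M(T, K) and S(T, K) ⊂ M(T^ρ, K). -/
open NormedSpace

namespace PseudoRel

variable {X : Type*} [NormedAddCommGroup X] [NormedSpace ℝ X] {p q : X × StrongDual ℝ X}

theorem symm_s18 (h : PseudoRel p q) : PseudoRel q p := by
  unfold PseudoRel at *
  rwa [min_comm, and_comm]

theorem apply_nonpos_of_nonneg (h : PseudoRel p q) (hp : 0 ≤ p.2 (q.1 - p.1)) :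
    q.2 (p.1 - q.1) ≤ 0 := by
  rcases h with hmin | ⟨hq, -⟩
  · rcases min_lt_iff.mp hmin with hq | hp'
    · exact hq.le
    · exact absurd hp hp'.not_ge
  · exact hq.le

end PseudoRel

/-- With `S = T` this is the classical inclusion `S(T,K) ⊆ M(T,K)` for pseudomonotone `T`. -/
theorem SVIsol_subset_MVIsol_of_pseudoRel {X : Type*} [NormedAddCommGroup X] [NormedSpace ℝ X]
    {S T : Set (X × StrongDual ℝ X)} (hST : ∀ p ∈ S, ∀ q ∈ T, PseudoRel p q) (K : Set X) :
    SVIsol S K ⊆ MVIsol T K := by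
  rintro x ⟨hxK, x', hx'S, hx'K⟩
  exact ⟨hxK, fun q hqT hqK => (hST (x, x') hx'S q hqT).apply_nonpos_of_nonneg (hx'K q.1 hqK)⟩

theorem svi_mvi_polar_inclusions
    {X : Type*} [NormedAddCommGroup X] [NormedSpace ℝ X]
    (T : Set (X × StrongDual ℝ X)) (K : Set X) :
    SVIsol (pPolar T) K ⊆ MVIsol T K ∧ SVIsol T K ⊆ MVIsol (pPolar T) K :=
  ⟨SVIsol_subset_MVIsol_of_pseudoRel (fun _ hp => hp) K,
    SVIsol_subset_MVIsol_of_pseudoRel (T := pPolar T) (fun p hp _ hq => (hq p hp).symm_s18) K⟩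
end
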